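/- For the residual map F(Z) = A Z + Z with A ∈ ℝ^{N×N} row-stochastic, the diversity satisfies r_∞(F(Z)) ≤ 2 r_∞(Z), and more generally for F(Z) = A Z + Z + Σ_{i=1}^T σ(Z Θ_i) with σ λ-Lipschitz and σ(0)=0, one has r_∞(F(Z)) ≤ (2 + λ Σ_i ‖Θ_i‖_1) r_∞(Z), where ‖Θ‖_1 denotes the maximum over rows of the ℓ_1 row sums of Θ. -/
import Mathlib


/-- The ℓ₁,ℓ∞-composite diversity measure r_∞(Z) = inf_z max_i Σ_j |Z_{ij} - z_j|. -/
noncomputable def rInf (N d : ℕ) (Z : Matrix (Fin N) (Fin d) ℝ) : ℝ :=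
  ⨅ z : Fin d → ℝ, ⨆ i : Fin N, ∑ j : Fin d, |Z i j - z j|

private lemma rInf_key (N d T : ℕ)
    (A : Matrix (Fin N) (Fin N) ℝ)
    (hpos : ∀ i k, 0 ≤ A i k) (hrow : ∀ i, ∑ k, A i k = 1)
    (Z : Matrix (Fin N) (Fin d) ℝ)
    (Θ : Fin T → Matrix (Fin d) (Fin d) ℝ)
    (σ : ℝ → ℝ) (lam : ℝ) (hlam : 0 ≤ lam)
    (hσ : ∀ a b : ℝ, |σ a - σ b| ≤ lam * |a - b|) :
    rInf N d (A * Z + Z +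
        ∑ i : Fin T, Matrix.of fun p q => σ ((Z * Θ i) p q)) ≤
      (2 + lam * ∑ i : Fin T, ⨆ p : Fin d, ∑ q : Fin d, |(Θ i) p q|) * rInf N d Z := by
  set S : Fin T → ℝ := fun t => ⨆ p : Fin d, ∑ q : Fin d, |(Θ t) p q| with hS
  have hSnn : ∀ t, 0 ≤ S t := fun t =>
    Real.iSup_nonneg fun p => Finset.sum_nonneg fun q _ => abs_nonneg _
  have hSrow : ∀ t p, ∑ q : Fin d, |(Θ t) p q| ≤ S t := by
    intro t p
    rw [hS]
    exact le_ciSup (f := fun p => ∑ q : Fin d, |(Θ t) p q|) ((Set.finite_range _).bddAbove) p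
  set C : ℝ := 2 + lam * ∑ t, S t with hCdef
  have hsum : 0 ≤ lam * ∑ t, S t :=
    mul_nonneg hlam (Finset.sum_nonneg fun t _ => hSnn t)
  have hCpos : (0:ℝ) < C := by simp only [hCdef]; linarith
  have hrZnn : 0 ≤ rInf N d Z :=
    le_ciInf fun z => Real.iSup_nonneg fun i => Finset.sum_nonneg fun j _ => abs_nonneg _
  apply le_of_forall_pos_le_add
  intro ε hε
  have hε' : 0 < ε / C := div_pos hε hCpos
  obtain ⟨z, hz⟩ := exists_lt_of_ciInf_lt
    (show rInf N d Z < rInf N d Z + ε / C by linarith)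
  set M : ℝ := ⨆ i : Fin N, ∑ j : Fin d, |Z i j - z j| with hM
  have hMnn : 0 ≤ M :=
    Real.iSup_nonneg fun i => Finset.sum_nonneg fun j _ => abs_nonneg _
  have hMk : ∀ k, ∑ j : Fin d, |Z k j - z j| ≤ M := by
    intro k
    rw [hM]
    exact le_ciSup (f := fun k => ∑ j : Fin d, |Z k j - z j|) ((Set.finite_range _).bddAbove) k
  set w : Fin d → ℝ := fun j => 2 * z j + ∑ t, σ (∑ m, z m * Θ t m j) with hw
  set W : Matrix (Fin N) (Fin d) ℝ :=
    A * Z + Z + ∑ i : Fin T, Matrix.of fun p q => σ ((Z * Θ i) p q) with hW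
  have hrowbound : ∀ i : Fin N, ∑ j : Fin d, |W i j - w j| ≤ C * M := by
    intro i
    have e1 : ∀ j, W i j = (∑ k, A i k * Z k j) + Z i j
        + ∑ t, σ (∑ m, Z i m * Θ t m j) := by
      intro j
      simp [hW, Matrix.add_apply, Matrix.mul_apply, Matrix.sum_apply]
    have hA : ∀ j, ∑ k, A i k * (Z k j - z j) = (∑ k, A i k * Z k j) - z j := by
      intro j
      simp [mul_sub, Finset.sum_sub_distrib, ← Finset.sum_mul, hrow i]
    have step1 : ∑ j : Fin d, |W i j - w j| ≤
        (∑ j : Fin d, |∑ k, A i k * (Z k j - z j)|)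
        + (∑ j : Fin d, |Z i j - z j|)
        + ∑ j : Fin d, ∑ t, |σ (∑ m, Z i m * Θ t m j) - σ (∑ m, z m * Θ t m j)| := by
      rw [← Finset.sum_add_distrib, ← Finset.sum_add_distrib]
      apply Finset.sum_le_sum
      intro j _
      have e2 : W i j - w j = (∑ k, A i k * (Z k j - z j)) + (Z i j - z j)
          + ∑ t, (σ (∑ m, Z i m * Θ t m j) - σ (∑ m, z m * Θ t m j)) := by
        rw [e1 j, hA j, Finset.sum_sub_distrib]
        simp only [hw]
        ring
      rw [e2]
      calc |(∑ k, A i k * (Z k j - z j)) + (Z i j - z j)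
            + ∑ t, (σ (∑ m, Z i m * Θ t m j) - σ (∑ m, z m * Θ t m j))|
          ≤ |(∑ k, A i k * (Z k j - z j)) + (Z i j - z j)|
            + |∑ t, (σ (∑ m, Z i m * Θ t m j) - σ (∑ m, z m * Θ t m j))| := abs_add_le _ _
        _ ≤ |∑ k, A i k * (Z k j - z j)| + |Z i j - z j|
            + ∑ t, |σ (∑ m, Z i m * Θ t m j) - σ (∑ m, z m * Θ t m j)| := by
            gcongr
            · exact abs_add_le _ _
            · exact Finset.abs_sum_le_sum_abs _ _
    have hT1 : ∑ j : Fin d, |∑ k, A i k * (Z k j - z j)| ≤ M := by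
      calc ∑ j : Fin d, |∑ k, A i k * (Z k j - z j)|
          ≤ ∑ j : Fin d, ∑ k, A i k * |Z k j - z j| := by
            apply Finset.sum_le_sum
            intro j _
            refine (Finset.abs_sum_le_sum_abs _ _).trans ?_
            apply Finset.sum_le_sum
            intro k _
            rw [abs_mul, abs_of_nonneg (hpos i k)]
        _ = ∑ k, A i k * ∑ j : Fin d, |Z k j - z j| := by
            rw [Finset.sum_comm]; simp [Finset.mul_sum]
        _ ≤ ∑ k, A i k * M :=
            Finset.sum_le_sum fun k _ => mul_le_mul_of_nonneg_left (hMk k) (hpos i k)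
        _ = M := by rw [← Finset.sum_mul, hrow i, one_mul]
    have hT3 : ∑ j : Fin d, ∑ t, |σ (∑ m, Z i m * Θ t m j) - σ (∑ m, z m * Θ t m j)|
        ≤ lam * M * ∑ t, S t := by
      rw [Finset.sum_comm]
      calc ∑ t, ∑ j : Fin d, |σ (∑ m, Z i m * Θ t m j) - σ (∑ m, z m * Θ t m j)|
          ≤ ∑ t, ∑ j : Fin d, lam * ∑ m, |Z i m - z m| * |Θ t m j| := by
            apply Finset.sum_le_sum; intro t _
            apply Finset.sum_le_sum; intro j _
            refine (hσ _ _).trans ?_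
            apply mul_le_mul_of_nonneg_left ?_ hlam
            rw [← Finset.sum_sub_distrib]
            refine (Finset.abs_sum_le_sum_abs _ _).trans ?_
            apply Finset.sum_le_sum; intro m _
            rw [← sub_mul, abs_mul]
        _ = ∑ t, lam * ∑ m, |Z i m - z m| * ∑ j : Fin d, |Θ t m j| := by
            apply Finset.sum_congr rfl; intro t _
            rw [← Finset.mul_sum, Finset.sum_comm]
            simp [Finset.mul_sum]
        _ ≤ ∑ t, lam * (M * S t) := by
            apply Finset.sum_le_sum; intro t _
            apply mul_le_mul_of_nonneg_left ?_ hlam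
            calc ∑ m, |Z i m - z m| * ∑ j : Fin d, |Θ t m j|
                ≤ ∑ m, |Z i m - z m| * S t := by
                  apply Finset.sum_le_sum; intro m _
                  exact mul_le_mul_of_nonneg_left (hSrow t m) (abs_nonneg _)
              _ = (∑ m, |Z i m - z m|) * S t := by rw [Finset.sum_mul]
              _ ≤ M * S t := mul_le_mul_of_nonneg_right (hMk i) (hSnn t)
        _ = lam * M * ∑ t, S t := by rw [Finset.mul_sum]; ring_nf
    have hT2 := hMk i
    have hfin : C * M = M + M + lam * M * ∑ t, S t := by rw [hCdef]; ring
    linarith [step1]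
  have h1 : rInf N d W ≤ ⨆ i : Fin N, ∑ j : Fin d, |W i j - w j| := by
    refine ciInf_le ⟨0, ?_⟩ w
    rintro x ⟨z', rfl⟩
    exact Real.iSup_nonneg fun i => Finset.sum_nonneg fun j _ => abs_nonneg _
  have h2 : (⨆ i : Fin N, ∑ j : Fin d, |W i j - w j|) ≤ C * M :=
    Real.iSup_le hrowbound (mul_nonneg hCpos.le hMnn)
  have h3 : C * M ≤ C * (rInf N d Z + ε / C) :=
    mul_le_mul_of_nonneg_left hz.le hCpos.le
  have h4 : C * (rInf N d Z + ε / C) = C * rInf N d Z + ε := by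
    rw [mul_add, mul_div_cancel₀ _ (ne_of_gt hCpos)]
  exact h1.trans (h2.trans (h3.trans h4.le))

/-- residual maps do not collapse diversity: for row-stochastic A,
r_∞(AZ + Z) ≤ 2 r_∞(Z), and with augmented shortcuts σ(ZΘᵢ) (σ λ-Lipschitz, σ 0 = 0),
r_∞(AZ + Z + Σᵢ σ(ZΘᵢ)) ≤ (2 + λ Σᵢ ‖Θᵢ‖₁) r_∞(Z), where
‖Θ‖₁ = max_p Σ_q |Θ_{pq}|. -/
theorem residual_diversity_bound (N d T : ℕ)
    (A : Matrix (Fin N) (Fin N) ℝ)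
    (hpos : ∀ i k, 0 ≤ A i k) (hrow : ∀ i, ∑ k, A i k = 1)
    (Z : Matrix (Fin N) (Fin d) ℝ)
    (Θ : Fin T → Matrix (Fin d) (Fin d) ℝ)
    (σ : ℝ → ℝ) (lam : ℝ) (hlam : 0 ≤ lam)
    (hσ : ∀ a b : ℝ, |σ a - σ b| ≤ lam * |a - b|) (hσ0 : σ 0 = 0) :
    rInf N d (A * Z + Z) ≤ 2 * rInf N d Z ∧
    rInf N d (A * Z + Z +
        ∑ i : Fin T, Matrix.of fun p q => σ ((Z * Θ i) p q)) ≤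
      (2 + lam * ∑ i : Fin T, ⨆ p : Fin d, ∑ q : Fin d, |(Θ i) p q|) * rInf N d Z := by
  constructor
  · have h := rInf_key N d 0 A hpos hrow Z (fun i => i.elim0) σ lam hlam hσ
    simpa using h
  · exact rInf_key N d T A hpos hrow Z Θ σ lam hlam hσ
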